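/- arXiv:2112.08849 — 2 statements merged into one kernel-verified Lean document; each statement's English description precedes it below -/
import Mathlib

section
/- For any positive definite Hermitian matrices W, W_t and vectors s, s_t, the inequality −s^H W^{-1} s ≤ 2 Re{Tr(W_t^{-1} s_t s_t^H W_t^{-1} W)} − 2 Re{s_t^H W_t^{-1} s} + c holds, where c = −2 Re{Tr(W_t^{-1} s_t s_t^H)} + s_t^H W_t^{-1} s_t + Tr(W_t^{-1} s_t s_t^H W_t^{-1} W_t) is the constant making equality hold at (s, W) = (s_t, W_t). -/
open Matrix
open scoped ComplexOrder

lemma trace_mul_vecMulVec' {n : ℕ} (M : Matrix (Fin n) (Fin n) ℂ) (u v : Fin n → ℂ) :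
    Matrix.trace (M * Matrix.vecMulVec u v) = v ⬝ᵥ (M *ᵥ u) := by
  simp only [Matrix.trace, Matrix.diag, Matrix.mul_apply, Matrix.vecMulVec_apply,
    Matrix.mulVec, dotProduct, Finset.mul_sum, Finset.sum_mul]
  apply Finset.sum_congr rfl; intro i _
  apply Finset.sum_congr rfl; intro j _
  ring

/-- MM majorization lemma (Lemma 1): for positive definite Hermitian `W, Wt` and
vectors `s, st`, `−s^H W⁻¹ s ≤ 2 Re Tr(Wt⁻¹ st st^H Wt⁻¹ W) − 2 Re(st^H Wt⁻¹ s) + c`,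
with `c = −2 Re Tr(Wt⁻¹ st st^H) + st^H Wt⁻¹ st + Tr(Wt⁻¹ st st^H Wt⁻¹ Wt)`. -/
theorem mm_majorization_lemma {n : ℕ} (W Wt : Matrix (Fin n) (Fin n) ℂ)
    (hW : W.PosDef) (hWt : Wt.PosDef) (s st : Fin n → ℂ) :
    (-(star s ⬝ᵥ (W⁻¹ *ᵥ s))).re ≤
      2 * (Matrix.trace (Wt⁻¹ * Matrix.vecMulVec st (star st) * Wt⁻¹ * W)).re
      - 2 * (star st ⬝ᵥ (Wt⁻¹ *ᵥ s)).re
      + (-2 * (Matrix.trace (Wt⁻¹ * Matrix.vecMulVec st (star st))).re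
         + (star st ⬝ᵥ (Wt⁻¹ *ᵥ st)).re
         + (Matrix.trace (Wt⁻¹ * Matrix.vecMulVec st (star st) * Wt⁻¹ * Wt)).re) := by
  have hWu : IsUnit W.det := (Matrix.isUnit_iff_isUnit_det W).mp hW.isUnit
  have hWtu : IsUnit Wt.det := (Matrix.isUnit_iff_isUnit_det Wt).mp hWt.isUnit
  have hWh : Wᴴ = W := hW.isHermitian
  have hWth : (Wt⁻¹)ᴴ = Wt⁻¹ := hWt.isHermitian.inv
  set a : Fin n → ℂ := Wt⁻¹ *ᵥ st with ha
  -- Hermitian swap for Wt⁻¹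
  have hswap : ∀ x : Fin n → ℂ, star a ⬝ᵥ x = star st ⬝ᵥ (Wt⁻¹ *ᵥ x) := by
    intro x
    rw [ha, star_mulVec, hWth, ← dotProduct_mulVec]
  -- trace computations
  have ht1 : Matrix.trace (Wt⁻¹ * Matrix.vecMulVec st (star st) * Wt⁻¹ * W)
      = star a ⬝ᵥ (W *ᵥ a) := by
    rw [mul_assoc (Wt⁻¹ * Matrix.vecMulVec st (star st)) Wt⁻¹ W, Matrix.trace_mul_comm,
      ← mul_assoc, trace_mul_vecMulVec', hswap (W *ᵥ a), ha, mulVec_mulVec, mulVec_mulVec]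
  have ht2 : Matrix.trace (Wt⁻¹ * Matrix.vecMulVec st (star st)) = star st ⬝ᵥ a := by
    rw [trace_mul_vecMulVec']
  have ht3 : Matrix.trace (Wt⁻¹ * Matrix.vecMulVec st (star st) * Wt⁻¹ * Wt)
      = star st ⬝ᵥ a := by
    rw [mul_assoc, Matrix.nonsing_inv_mul Wt hWtu, mul_one, trace_mul_vecMulVec']
  -- dot product equality
  have hd : star st ⬝ᵥ (Wt⁻¹ *ᵥ s) = star a ⬝ᵥ s := (hswap s).symm
  have hd2 : star st ⬝ᵥ (Wt⁻¹ *ᵥ st) = star st ⬝ᵥ a := rfl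
  -- nonnegativity 1
  have h1 : 0 ≤ (star a ⬝ᵥ (W *ᵥ a)).re := hW.posSemidef.re_dotProduct_nonneg a
  -- nonnegativity 2
  set v : Fin n → ℂ := W *ᵥ a - s with hv
  have h2 : 0 ≤ (star v ⬝ᵥ (W⁻¹ *ᵥ v)).re := hW.inv.posSemidef.re_dotProduct_nonneg v
  have hexp : star v ⬝ᵥ (W⁻¹ *ᵥ v)
      = star a ⬝ᵥ (W *ᵥ a) - star a ⬝ᵥ s - star s ⬝ᵥ a + star s ⬝ᵥ (W⁻¹ *ᵥ s) := by
    have hWa : ∀ x, star (W *ᵥ a) ⬝ᵥ x = star a ⬝ᵥ (W *ᵥ x) := fun x => by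
      rw [star_mulVec, hWh, ← dotProduct_mulVec]
    have hinv1 : W⁻¹ *ᵥ (W *ᵥ a) = a := by
      rw [mulVec_mulVec, Matrix.nonsing_inv_mul W hWu, one_mulVec]
    have hinv2 : W *ᵥ (W⁻¹ *ᵥ s) = s := by
      rw [mulVec_mulVec, Matrix.mul_nonsing_inv W hWu, one_mulVec]
    rw [hv]
    simp only [star_sub, sub_dotProduct, mulVec_sub, dotProduct_sub, hWa, hinv1, hinv2,
      mulVec_sub]
    ring
  have hre : (star s ⬝ᵥ a).re = (star a ⬝ᵥ s).re := by
    have : star (star a ⬝ᵥ s) = star s ⬝ᵥ a := by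
      rw [star_dotProduct]; simp
    rw [← this, Complex.star_def, Complex.conj_re]
  rw [ht1, ht2, ht3, hd]
  have := congrArg Complex.re hexp
  simp only [Complex.sub_re, Complex.add_re, Complex.neg_re] at this ⊢
  rw [hre] at this
  linarith [h2, h1, this]
end

section
/- For a complex number a and a real number b (b ∈ ℝ) with |a| + b ≥ 0 and a ≠ 0, the minimizer of g(y) = |y − a|² + (|y| − b)² over y ∈ ℂ is y* = ½(|a| + b) e^{j∠a}. -/
/-- The minimizer of `g(y) = |y − a|² + (|y| − b)²` over `y ∈ ℂ`, for `a ≠ 0`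
and `|a| + b ≥ 0`, is `y* = ½(|a| + b) e^{j∠a}`. -/
theorem min_modulus_phase_problem (a : ℂ) (ha : a ≠ 0) (b : ℝ)
    (hb : 0 ≤ ‖a‖ + b) :
    let ystar : ℂ := (((‖a‖ + b) / 2 : ℝ) : ℂ) * (a / (‖a‖ : ℂ))
    ∀ y : ℂ,
      ‖ystar - a‖ ^ 2 + (‖ystar‖ - b) ^ 2 ≤
      ‖y - a‖ ^ 2 + (‖y‖ - b) ^ 2 := by
  intro ystar y
  set r := ‖a‖ with hr
  have hr0 : 0 < r := norm_pos_iff.mpr ha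
  have hrne : (r : ℂ) ≠ 0 := by exact_mod_cast hr0.ne'
  have ht : 0 ≤ (r + b) / 2 := by linarith
  have habs : ‖ystar‖ = (r + b) / 2 := by
    show ‖(_ : ℂ) * (a / _)‖ = _
    rw [norm_mul, norm_div, Complex.norm_real, Complex.norm_real, Real.norm_eq_abs, Real.norm_eq_abs, ← hr,
      abs_of_nonneg ht, abs_of_nonneg hr0.le, div_self hr0.ne', mul_one]
  have hdiff : ‖ystar - a‖ = |(r + b) / 2 - r| := by
    have h : ystar - a = ((((r + b) / 2 - r) / r : ℝ) : ℂ) * a := by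
      show ((((r + b) / 2 : ℝ)) : ℂ) * (a / (r : ℂ)) - a = _
      push_cast
      field_simp
    rw [h, norm_mul, Complex.norm_real, Real.norm_eq_abs, ← hr, abs_div, abs_of_nonneg hr0.le,
      div_mul_cancel₀ _ hr0.ne']
  have h1 : |‖y‖ - r| ≤ ‖y - a‖ :=
    abs_norm_sub_norm_le y a
  have h0 : (0:ℝ) ≤ ‖y - a‖ := norm_nonneg _
  rw [habs, hdiff]
  set s := ‖y‖
  have hsq : ((r + b) / 2 - r) ^ 2 = |(r + b) / 2 - r| ^ 2 := (sq_abs _).symm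
  nlinarith [sq_nonneg (s - (r + b) / 2), sq_abs (s - r), sq_abs ((r + b) / 2 - r),
    sq_nonneg (‖y - a‖ - |s - r|), abs_nonneg (s - r)]
end
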